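/- arXiv:1909.00908 — 5 statements merged into one kernel-verified Lean document; each statement's English description precedes it below -/
import Mathlib

section
/- The function G(x) = ln(x)/(x² - 1) is strictly decreasing on (1, ∞). -/
theorem G_strictAntiOn :
    StrictAntiOn (fun x : ℝ => Real.log x / (x ^ 2 - 1)) (Set.Ioi 1) := by
  have key : ∀ x ∈ Set.Ioi (1:ℝ),
      HasDerivAt (fun x : ℝ => Real.log x / (x ^ 2 - 1))
        (((1/x) * (x ^ 2 - 1) - Real.log x * (2 * x)) / (x ^ 2 - 1) ^ 2) x := by
    intro x hx
    have hx1 : (1:ℝ) < x := hx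
    have hxpos : (0:ℝ) < x := lt_trans one_pos hx1
    have hden : x ^ 2 - 1 ≠ 0 := by nlinarith
    have h1 : HasDerivAt Real.log (1/x) x := by
      simpa [one_div] using Real.hasDerivAt_log (ne_of_gt hxpos)
    have h2 : HasDerivAt (fun x : ℝ => x ^ 2 - 1) (2 * x) x := by
      simpa using ((hasDerivAt_pow 2 x).sub_const 1)
    exact h1.div h2 hden
  apply StrictAntiOn.mono ?_ (le_refl (Set.Ioi 1))
  apply strictAntiOn_of_deriv_neg (convex_Ioi 1)
  · exact ContinuousOn.congr (fun x hx => (key x hx).continuousAt.continuousWithinAt) (fun x hx => rfl) |>.mono (le_refl _)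
  · intro x hx
    rw [interior_Ioi] at hx
    rw [(key x hx).deriv]
    have hx1 : (1:ℝ) < x := hx
    have hxpos : (0:ℝ) < x := lt_trans one_pos hx1
    have hlog : Real.log (1 / x ^ 2) < 1 / x ^ 2 - 1 := by
      apply Real.log_lt_sub_one_of_pos (by positivity)
      intro h
      have : x ^ 2 = 1 := by field_simp at h; linarith
      nlinarith
    rw [Real.log_div one_ne_zero (by positivity), Real.log_one, Real.log_pow] at hlog
    have hnum : (1/x) * (x ^ 2 - 1) - Real.log x * (2 * x) < 0 := by
      have h2 : (0:ℝ) < x ^ 2 := by positivity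
      rw [div_sub_one (ne_of_gt h2)] at hlog
      have h3 := (div_lt_div_iff₀ (by positivity) h2).mp (by push_cast at hlog ⊢; linarith : (0 - 2 * Real.log x) / 1 < (1 - x^2)/ x^2)
      have hinv : x * (1/x) = 1 := by field_simp
      nlinarith [h3, hinv, hxpos, mul_pos hxpos hxpos]
    exact div_neg_of_neg_of_pos hnum (pow_pos (by nlinarith) 2)
end

section
/- Let T > 0, R > 0. The second derivative of A(Q) = √T·(ln(1+Q) - R·ln 2)/√(1 - 1/(1+Q)²) satisfies A''(Q) = (√T/(1+Q))·[3(ln(1+Q) - R·ln 2)/((1+Q)²-1)^{5/2} + 3(ln(1+Q) - R·ln 2)/((1+Q)²-1)^{3/2} - 2/((1+Q)²-1)^{3/2} - 1/((1+Q)²-1)^{1/2}], and A''(Q) < 0 whenever Q > Q₀, where Q₀ is the unique positive solution of ln(1+Q)/((1+Q)² - 1) = 1/3. -/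
/-!
Substituting `u = 1 + Q`, the function is `√T (log u - c) u / √(u² - 1)` with `c = R log 2`, and
differentiating twice gives the stated formula. With `v = u² - 1`, multiplying the bracket by `v^{5/2}` gives
`(3(log u - c) - v)(1 + v) - v`, which is negative as soon as `3 log u < v`. The ratio `log(1 + Q)/((1 + Q)² - 1)` is continuous and below `1/3` for `Q > 1`,
so by the intermediate value theorem and uniqueness of `Q₀` it stays below `1/3` beyond `Q₀`.
-/

open Real Set Filter Topology

lemma lt_of_continuousOn_Icc_of_forall_ne {f : ℝ → ℝ} {a b y : ℝ} (hab : a ≤ b)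
    (hf : ContinuousOn f (Icc a b)) (hb : f b < y) (hne : ∀ x ∈ Icc a b, f x ≠ y) : f a < y := by
  by_contra! h
  obtain ⟨x, hx, hfx⟩ := intermediate_value_Icc' hab hf ⟨hb.le, h⟩
  exact hne x hx hfx

lemma continuousOn_log_one_add_div :
    ContinuousOn (fun x : ℝ => log (1 + x) / ((1 + x) ^ 2 - 1)) (Ioi 0) := by
  refine ContinuousOn.div (by fun_prop (disch := intro x hx; simp at hx; linarith)) (by fun_prop) ?_
  intro x hx
  simp only [mem_Ioi] at hx
  nlinarith

lemma log_one_add_div_lt_third {x : ℝ} (hx : 1 < x) : log (1 + x) / ((1 + x) ^ 2 - 1) < 1 / 3 := by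
  have hlog : log (1 + x) ≤ x := by linarith [log_le_sub_one_of_pos (x := 1 + x) (by linarith)]
  rw [div_lt_iff₀ (by nlinarith)]
  nlinarith

lemma log_one_add_div_lt_third_of_gt {Q₀ Q : ℝ} (hQ₀ : 0 < Q₀)
    (huniq : ∀ x : ℝ, 0 < x → log (1 + x) / ((1 + x) ^ 2 - 1) = 1 / 3 → x = Q₀) (hQ : Q₀ < Q) :
    log (1 + Q) / ((1 + Q) ^ 2 - 1) < 1 / 3 := by
  have hQpos : 0 < Q := hQ₀.trans hQ
  refine lt_of_continuousOn_Icc_of_forall_ne (f := fun x => log (1 + x) / ((1 + x) ^ 2 - 1))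
    (b := Q + 1) (by linarith)
    (continuousOn_log_one_add_div.mono fun x hx => hQpos.trans_le hx.1)
    (log_one_add_div_lt_third (by linarith)) fun x hx heq => ?_
  have hx_eq : x = Q₀ := huniq x (hQpos.trans_le hx.1) heq
  linarith [hx.1]

lemma sqrt_one_sub_one_div_sq {u : ℝ} (hu : 0 < u) : √(1 - 1 / u ^ 2) = √(u ^ 2 - 1) / u := by
  rw [show 1 - 1 / u ^ 2 = (u ^ 2 - 1) / u ^ 2 by field_simp, sqrt_div' _ (sq_nonneg u),
    sqrt_sq hu.le]

lemma hasDerivAt_sqrt_sq_sub_one {u : ℝ} (hu : 1 < u) :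
    HasDerivAt (fun u => √(u ^ 2 - 1)) (u / √(u ^ 2 - 1)) u := by
  have hv : 0 < u ^ 2 - 1 := by nlinarith
  convert ((hasDerivAt_pow 2 u).sub_const 1).sqrt hv.ne' using 1
  field_simp
  ring

section Profile

variable (a c : ℝ)

/-- The function `A` in the variable `u = 1 + Q`, with `a = √T` and `c = R log 2`. -/
noncomputable def profile (u : ℝ) : ℝ := a * (log u - c) / √(1 - 1 / u ^ 2)

variable {a c}

lemma profile_eq {u : ℝ} (hu : 0 < u) : profile a c u = a * ((log u - c) * u / √(u ^ 2 - 1)) := by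
  rw [profile, sqrt_one_sub_one_div_sq hu]
  rcases (sqrt_nonneg (u ^ 2 - 1)).lt_or_eq' with hs | hs
  · field_simp
  · simp [hs]

lemma hasDerivAt_profile {u : ℝ} (hu : 1 < u) :
    HasDerivAt (profile a c) (a * (1 / √(u ^ 2 - 1) - (log u - c) / √(u ^ 2 - 1) ^ 3)) u := by
  have hv : 0 < u ^ 2 - 1 := by nlinarith
  have hs2 : √(u ^ 2 - 1) ^ 2 = u ^ 2 - 1 := sq_sqrt hv.le
  have hquot := ((((hasDerivAt_log (by linarith)).sub_const c).fun_mul (hasDerivAt_id' u)).fun_div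
    (hasDerivAt_sqrt_sq_sub_one hu) (sqrt_pos.mpr hv).ne').const_mul a
  have hev : profile a c =ᶠ[𝓝 u] fun u => a * ((log u - c) * u / √(u ^ 2 - 1)) :=
    eventually_of_mem (Ioi_mem_nhds (by linarith : (0 : ℝ) < u)) fun x hx => profile_eq hx
  refine (hquot.congr_of_eventuallyEq hev).congr_deriv ?_
  field_simp
  linear_combination a * (log u - c) * hs2

lemma hasDerivAt_deriv_profile {u : ℝ} (hu : 1 < u) :
    HasDerivAt (deriv (profile a c))
      (a / u * (3 * (log u - c) / √(u ^ 2 - 1) ^ 5 + 3 * (log u - c) / √(u ^ 2 - 1) ^ 3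
        - 2 / √(u ^ 2 - 1) ^ 3 - 1 / √(u ^ 2 - 1))) u := by
  have hv : 0 < u ^ 2 - 1 := by nlinarith
  have hs : 0 < √(u ^ 2 - 1) := sqrt_pos.mpr hv
  have hs2 : √(u ^ 2 - 1) ^ 2 = u ^ 2 - 1 := sq_sqrt hv.le
  have hS := hasDerivAt_sqrt_sq_sub_one hu
  have hdiff := (((hasDerivAt_const u (1 : ℝ)).fun_div hS hs.ne').fun_sub
    (((hasDerivAt_log (by linarith)).sub_const c).fun_div (hS.fun_pow 3)
      (pow_ne_zero 3 hs.ne'))).const_mul a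
  have hev : deriv (profile a c) =ᶠ[𝓝 u]
      fun u => a * (1 / √(u ^ 2 - 1) - (log u - c) / √(u ^ 2 - 1) ^ 3) :=
    eventually_of_mem (Ioi_mem_nhds hu) fun x hx => (hasDerivAt_profile hx).deriv
  refine (hdiff.congr_of_eventuallyEq hev).congr_deriv ?_
  have hu0 : u ≠ 0 := by linarith
  field_simp
  linear_combination -a * (3 * (log u - c) - √(u ^ 2 - 1) ^ 2) * √(u ^ 2 - 1) ^ 2 * hs2

lemma deriv_deriv_profile {u : ℝ} (hu : 1 < u) :
    deriv (deriv (profile a c)) u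
      = a / u * (3 * (log u - c) / (u ^ 2 - 1) ^ ((5 : ℝ) / 2)
        + 3 * (log u - c) / (u ^ 2 - 1) ^ ((3 : ℝ) / 2)
        - 2 / (u ^ 2 - 1) ^ ((3 : ℝ) / 2) - 1 / (u ^ 2 - 1) ^ ((1 : ℝ) / 2)) := by
  have hv : 0 ≤ u ^ 2 - 1 := by nlinarith
  simp only [rpow_div_two_eq_sqrt _ hv, rpow_one]
  norm_cast
  exact (hasDerivAt_deriv_profile hu).deriv

end Profile

lemma second_deriv_bracket_neg {v L : ℝ} (hv : 0 < v) (hL : 3 * L < v) :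
    3 * L / v ^ ((5 : ℝ) / 2) + 3 * L / v ^ ((3 : ℝ) / 2) - 2 / v ^ ((3 : ℝ) / 2)
      - 1 / v ^ ((1 : ℝ) / 2) < 0 := by
  have hs2 : √v ^ 2 = v := sq_sqrt hv.le
  simp only [rpow_div_two_eq_sqrt _ hv.le, rpow_one]
  norm_cast
  have hrw : 3 * L / √v ^ 5 + 3 * L / √v ^ 3 - 2 / √v ^ 3 - 1 / √v
      = ((3 * L - v) * (1 + v) - v) / √v ^ 5 := by
    field_simp
    linear_combination (3 * L - √v ^ 2 - v - 2) * hs2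
  rw [hrw]
  exact div_neg_of_neg_of_pos (by nlinarith) (by positivity)

theorem A_second_deriv_general (T R Q₀ : ℝ) (hT : 0 < T) (hR : 0 < R)
    (hQ₀ : 0 < Q₀)
    (hQ₀uniq : ∀ Q : ℝ, 0 < Q → Real.log (1 + Q) / ((1 + Q) ^ 2 - 1) = 1 / 3 → Q = Q₀) :
    ∀ Q : ℝ, Q₀ < Q →
      deriv (deriv (fun Q : ℝ =>
          Real.sqrt T * (Real.log (1 + Q) - R * Real.log 2) /
            Real.sqrt (1 - 1 / (1 + Q) ^ 2))) Q
        = (Real.sqrt T / (1 + Q)) *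
            (3 * (Real.log (1 + Q) - R * Real.log 2) / ((1 + Q) ^ 2 - 1) ^ ((5:ℝ)/2)
             + 3 * (Real.log (1 + Q) - R * Real.log 2) / ((1 + Q) ^ 2 - 1) ^ ((3:ℝ)/2)
             - 2 / ((1 + Q) ^ 2 - 1) ^ ((3:ℝ)/2)
             - 1 / ((1 + Q) ^ 2 - 1) ^ ((1:ℝ)/2)) ∧
      deriv (deriv (fun Q : ℝ =>
          Real.sqrt T * (Real.log (1 + Q) - R * Real.log 2) /
            Real.sqrt (1 - 1 / (1 + Q) ^ 2))) Q < 0 := by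
  intro Q hQ
  have hu : 1 < 1 + Q := by linarith
  have hshift : deriv (fun Q => profile √T (R * log 2) (1 + Q))
      = fun Q => deriv (profile √T (R * log 2)) (1 + Q) :=
    funext fun Q => deriv_comp_const_add _ _ _
  have hformula := (congrArg (deriv · Q) hshift).trans
    ((deriv_comp_const_add _ _ _).trans (deriv_deriv_profile hu))
  have hratio := log_one_add_div_lt_third_of_gt hQ₀ hQ₀uniq hQ
  have hv : 0 < (1 + Q) ^ 2 - 1 := by nlinarith
  rw [div_lt_iff₀ hv] at hratio
  have hlog2 : 0 < R * log 2 := mul_pos hR (log_pos one_lt_two)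
  refine ⟨hformula, hformula.trans_lt (mul_neg_of_pos_of_neg (by positivity) ?_)⟩
  exact second_deriv_bracket_neg hv (by linarith)

theorem A_second_deriv (T R Q₀ : ℝ) (hT : 0 < T) (hR : 0 < R)
    (hQ₀ : 0 < Q₀) (hQ₀eq : Real.log (1 + Q₀) / ((1 + Q₀) ^ 2 - 1) = 1 / 3)
    (hQ₀uniq : ∀ Q : ℝ, 0 < Q → Real.log (1 + Q) / ((1 + Q) ^ 2 - 1) = 1 / 3 → Q = Q₀) :
    ∀ Q : ℝ, Q₀ < Q →
      deriv (deriv (fun Q : ℝ =>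
          Real.sqrt T * (Real.log (1 + Q) - R * Real.log 2) /
            Real.sqrt (1 - 1 / (1 + Q) ^ 2))) Q
        = (Real.sqrt T / (1 + Q)) *
            (3 * (Real.log (1 + Q) - R * Real.log 2) / ((1 + Q) ^ 2 - 1) ^ ((5:ℝ)/2)
             + 3 * (Real.log (1 + Q) - R * Real.log 2) / ((1 + Q) ^ 2 - 1) ^ ((3:ℝ)/2)
             - 2 / ((1 + Q) ^ 2 - 1) ^ ((3:ℝ)/2)
             - 1 / ((1 + Q) ^ 2 - 1) ^ ((1:ℝ)/2)) ∧
      deriv (deriv (fun Q : ℝ =>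
          Real.sqrt T * (Real.log (1 + Q) - R * Real.log 2) /
            Real.sqrt (1 - 1 / (1 + Q) ^ 2))) Q < 0 :=
  A_second_deriv_general T R Q₀ hT hR hQ₀ hQ₀uniq
end

section
/- Let N ≥ 1 be an integer and P_max > 0, and p_t(Q) = 1 - γ(N, Q/P_max)/Γ(N). Then p_t''(Q) = e^{-Q/P_max}·(Q/P_max)^{N+1}·(Q - P_max(N-1))/(Q³·Γ(N)); in particular, p_t''(Q) < 0 for 0 < Q < P_max(N-1), p_t''(Q) = 0 at Q = P_max(N-1), and p_t''(Q) > 0 for Q > P_max(N-1). -/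
/-- The lower incomplete gamma function γ(s, x) = ∫₀^x t^{s-1} e^{-t} dt. -/
noncomputable def lowerGamma (s x : ℝ) : ℝ :=
  ∫ t in Set.Ioo 0 x, t ^ (s - 1) * Real.exp (-t)

/-!
For `x > 0` the fundamental theorem of calculus gives `∂ₓ γ(s, x) = x^(s-1) e^{-x}`, so
`p_t'(Q) = -(Q/P)^(s-1) e^{-Q/P} / (P Γ(s))`; since `(x^a e^{-x})' = x^(a-1) e^{-x} (a - x)`,
`p_t''(Q)` has the sign of `Q - P (s - 1)`.
-/

open Real Set Filter Topology MeasureTheory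

noncomputable def regUpperGamma (s x : ℝ) : ℝ := 1 - lowerGamma s x / Gamma s

lemma lowerGamma_of_nonpos (s : ℝ) {x : ℝ} (hx : x ≤ 0) : lowerGamma s x = 0 := by
  rw [lowerGamma, Ioo_eq_empty (not_lt.2 hx), Measure.restrict_empty,
    integral_zero_measure]

lemma regUpperGamma_of_nonpos (s : ℝ) {x : ℝ} (hx : x ≤ 0) : regUpperGamma s x = 1 := by
  rw [regUpperGamma, lowerGamma_of_nonpos s hx, zero_div, sub_zero]

lemma lowerGamma_eq_intervalIntegral (s : ℝ) {x : ℝ} (hx : 0 ≤ x) :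
    lowerGamma s x = ∫ t in 0..x, t ^ (s - 1) * exp (-t) := by
  rw [lowerGamma, intervalIntegral.integral_of_le hx, integral_Ioc_eq_integral_Ioo]

lemma hasDerivAt_lowerGamma {s x : ℝ} (hs : 0 < s) (hx : 0 < x) :
    HasDerivAt (lowerGamma s) (x ^ (s - 1) * exp (-x)) x := by
  have hcont : ContinuousOn (fun t : ℝ => t ^ (s - 1) * exp (-t)) (Ioi 0) := fun t ht =>
    ((continuousAt_id.rpow_const (.inl (ne_of_gt ht))).mul
      (continuous_exp.comp continuous_neg).continuousAt).continuousWithinAt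
  have hint : IntervalIntegrable (fun t : ℝ => t ^ (s - 1) * exp (-t)) volume 0 x := by
    rw [intervalIntegrable_iff_integrableOn_Ioc_of_le hx.le]
    simpa only [mul_comm] using (GammaIntegral_convergent hs).mono_set Ioc_subset_Ioi_self
  refine (intervalIntegral.integral_hasDerivAt_right hint
    (hcont.stronglyMeasurableAtFilter isOpen_Ioi x hx)
    (hcont.continuousAt (Ioi_mem_nhds hx))).congr_of_eventuallyEq ?_
  filter_upwards [Ioi_mem_nhds hx] with y hy using lowerGamma_eq_intervalIntegral s (le_of_lt hy)

lemma hasDerivAt_regUpperGamma {s x : ℝ} (hs : 0 < s) (hx : 0 < x) :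
    HasDerivAt (regUpperGamma s) (-(x ^ (s - 1) * exp (-x) / Gamma s)) x :=
  ((hasDerivAt_lowerGamma hs hx).div_const (Gamma s)).const_sub 1

lemma hasDerivAt_rpow_mul_exp_neg (a : ℝ) {x : ℝ} (hx : 0 < x) :
    HasDerivAt (fun x => x ^ a * exp (-x)) (x ^ (a - 1) * exp (-x) * (a - x)) x := by
  refine ((hasDerivAt_rpow_const (.inl hx.ne')).mul (hasDerivAt_neg x).exp).congr_deriv ?_
  rw [rpow_sub_one hx.ne']
  field_simp
  ring

lemma deriv_regUpperGamma_comp_div {s P : ℝ} (hs : 0 < s) (hP : 0 < P) :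
    EqOn (deriv fun Q => regUpperGamma s (Q / P))
      (fun Q => -((Q / P) ^ (s - 1) * exp (-(Q / P))) / (P * Gamma s)) (Ioi 0) := by
  intro Q hQ
  have hderiv := (hasDerivAt_regUpperGamma hs (div_pos hQ hP)).comp Q
    ((hasDerivAt_id' (x := Q)).div_const P)
  rw [Function.comp_def] at hderiv
  rw [hderiv.deriv]
  field_simp

lemma deriv_deriv_regUpperGamma_comp_div {s P Q : ℝ} (hs : 0 < s) (hP : 0 < P) (hQ : 0 < Q) :
    deriv (deriv fun Q => regUpperGamma s (Q / P)) Q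
      = exp (-(Q / P)) * (Q / P) ^ (s + 1) * (Q - P * (s - 1)) / (Q ^ 3 * Gamma s) := by
  have hx : 0 < Q / P := div_pos hQ hP
  have hderiv : HasDerivAt (fun Q => -((Q / P) ^ (s - 1) * exp (-(Q / P))) / (P * Gamma s))
      (-((Q / P) ^ (s - 1 - 1) * exp (-(Q / P)) * (s - 1 - Q / P) * (1 / P)) / (P * Gamma s)) Q :=
    ((hasDerivAt_rpow_mul_exp_neg (s - 1) hx).comp Q
      ((hasDerivAt_id' (x := Q)).div_const P)).neg.div_const (P * Gamma s)
  rw [(deriv_regUpperGamma_comp_div hs hP).eventuallyEq_of_mem (Ioi_mem_nhds hQ) |>.deriv_eq,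
    hderiv.deriv]
  have hpow : (Q / P) ^ (s + 1) = (Q / P) ^ (s - 1 - 1) * (Q / P) ^ 3 := by
    rw [← rpow_natCast, ← rpow_add hx]; norm_num; ring_nf
  have : Gamma s ≠ 0 := (Gamma_pos_of_pos hs).ne'
  rw [hpow]
  field_simp
  ring

/-- For `s = 1` the first derivative jumps from `0` to `-1 / P` at `0`, so it is not
differentiable there and `deriv` returns its junk value `0`. -/
lemma deriv_deriv_regUpperGamma_one_comp_div_zero {P : ℝ} (hP : 0 < P) :
    deriv (deriv fun Q => regUpperGamma 1 (Q / P)) 0 = 0 := by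
  refine deriv_zero_of_not_differentiableAt fun h => ?_
  have hleft : Tendsto (deriv fun Q => regUpperGamma 1 (Q / P)) (𝓝[<] 0) (𝓝 0) := by
    refine tendsto_const_nhds.congr' ?_
    filter_upwards [self_mem_nhdsWithin] with x hx
    have : (fun Q => regUpperGamma 1 (Q / P)) =ᶠ[𝓝 x] fun _ => 1 := by
      filter_upwards [Iio_mem_nhds hx] with y hy
      exact regUpperGamma_of_nonpos 1 (div_nonpos_of_nonpos_of_nonneg (le_of_lt hy) hP.le)
    rw [this.deriv_eq, deriv_const]
  have hright : Tendsto (deriv fun Q => regUpperGamma 1 (Q / P)) (𝓝[>] 0) (𝓝 (-1 / P)) := by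
    have hcont : Tendsto (fun Q => -exp (-(Q / P)) / P) (𝓝 0) (𝓝 (-1 / P)) := by
      simpa using (show Continuous fun Q => -exp (-(Q / P)) / P by fun_prop).tendsto 0
    refine (hcont.mono_left nhdsWithin_le_nhds).congr' ?_
    filter_upwards [self_mem_nhdsWithin] with x hx
    simp [deriv_regUpperGamma_comp_div one_pos hP hx]
  have h1 := tendsto_nhds_unique (h.continuousAt.tendsto.mono_left nhdsWithin_le_nhds) hleft
  have h2 := tendsto_nhds_unique (h.continuousAt.tendsto.mono_left nhdsWithin_le_nhds) hright
  exact div_ne_zero (by norm_num) hP.ne' (h2.symm.trans h1)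

theorem pt_second_deriv (N : ℕ) (hN : 1 ≤ N) (Pmax : ℝ) (hP : 0 < Pmax) :
    (∀ Q : ℝ, 0 < Q →
      deriv (deriv (fun Q : ℝ => 1 - lowerGamma N (Q / Pmax) / Real.Gamma N)) Q
        = Real.exp (-(Q / Pmax)) * (Q / Pmax) ^ (N + 1) * (Q - Pmax * ((N : ℝ) - 1)) /
            (Q ^ 3 * Real.Gamma N)) ∧
    (∀ Q : ℝ, 0 < Q → Q < Pmax * ((N : ℝ) - 1) →
      deriv (deriv (fun Q : ℝ => 1 - lowerGamma N (Q / Pmax) / Real.Gamma N)) Q < 0) ∧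
    deriv (deriv (fun Q : ℝ => 1 - lowerGamma N (Q / Pmax) / Real.Gamma N))
        (Pmax * ((N : ℝ) - 1)) = 0 ∧
    (∀ Q : ℝ, Pmax * ((N : ℝ) - 1) < Q →
      deriv (deriv (fun Q : ℝ => 1 - lowerGamma N (Q / Pmax) / Real.Gamma N)) Q > 0) := by
  have hp : (fun Q : ℝ => 1 - lowerGamma N (Q / Pmax) / Real.Gamma N)
      = fun Q => regUpperGamma N (Q / Pmax) := rfl
  rw [hp]
  have hN' : (1 : ℝ) ≤ N := by exact_mod_cast hN
  have formula (Q : ℝ) (hQ : 0 < Q) : deriv (deriv fun Q => regUpperGamma N (Q / Pmax)) Q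
      = exp (-(Q / Pmax)) * (Q / Pmax) ^ (N + 1) * (Q - Pmax * ((N : ℝ) - 1)) /
          (Q ^ 3 * Gamma N) := by
    rw [deriv_deriv_regUpperGamma_comp_div (by positivity) hP hQ]
    norm_cast
  refine ⟨formula, fun Q hQ hlt => ?_, ?_, fun Q hlt => ?_⟩
  · rw [formula Q hQ]
    exact div_neg_of_neg_of_pos (mul_neg_of_pos_of_neg (by positivity) (by linarith))
      (by positivity)
  · rcases hN.eq_or_lt with rfl | hN2
    · rw [Nat.cast_one, sub_self, mul_zero]
      exact deriv_deriv_regUpperGamma_one_comp_div_zero hP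
    · have : (1 : ℝ) < N := by exact_mod_cast hN2
      rw [formula _ (by nlinarith), sub_self, mul_zero, zero_div]
  · have hQ : 0 < Q := lt_of_le_of_lt (by nlinarith) hlt
    rw [formula Q hQ]
    exact div_pos (mul_pos (by positivity) (by linarith)) (by positivity)
end

section
/- The function ṗ(N) = 1 - γ(N, N-1)/Γ(N), defined for integers N ≥ 1 where γ is the lower incomplete gamma function, is strictly decreasing in N. -/
open Real Set MeasureTheory intervalIntegral
open scoped Nat

theorem intervalIntegral.mul_lt_integral_of_strictAntiOn {f : ℝ → ℝ} {a b : ℝ} (hab : a < b)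
    (hc : ContinuousOn f (Icc a b)) (hf : StrictAntiOn f (Icc a b)) :
    (b - a) * f b < ∫ x in a..b, f x := by
  have hb : b ∈ Icc a b := right_mem_Icc.2 hab.le
  have h := integral_lt_integral_of_continuousOn_of_le_of_exists_lt hab continuousOn_const hc
    (fun x hx => hf.antitoneOn (Ioc_subset_Icc_self hx) hb hx.2)
    ⟨a, left_mem_Icc.2 hab.le, hf (left_mem_Icc.2 hab.le) hb hab⟩
  simpa using h

theorem hasDerivAt_pow_mul_exp_neg (n : ℕ) (t : ℝ) :
    HasDerivAt (fun t => t ^ n * exp (-t)) (n * t ^ (n - 1) * exp (-t) - t ^ n * exp (-t)) t :=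
  ((hasDerivAt_pow n t).mul (hasDerivAt_neg t).exp).congr_deriv (by ring)

theorem strictAntiOn_pow_mul_exp_neg (n : ℕ) :
    StrictAntiOn (fun t : ℝ => t ^ n * exp (-t)) (Ici (n : ℝ)) := by
  refine strictAntiOn_of_deriv_neg (convex_Ici _) (by fun_prop) fun t ht => ?_
  rw [interior_Ici] at ht
  rw [(hasDerivAt_pow_mul_exp_neg n t).deriv]
  have ht0 : 0 < t := (Nat.cast_nonneg n).trans_lt ht
  rcases n.eq_zero_or_pos with rfl | hn
  · simpa using exp_pos (-t)
  · have hfactor : n * t ^ (n - 1) * exp (-t) - t ^ n * exp (-t)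
        = t ^ (n - 1) * exp (-t) * (n - t) := by
      rw [← Nat.sub_add_cancel hn, pow_succ, Nat.add_sub_cancel]
      ring
    rw [hfactor]
    exact mul_neg_of_pos_of_neg (by positivity) (sub_neg.2 ht)

theorem integral_pow_succ_mul_exp_neg (n : ℕ) (a : ℝ) :
    ∫ t in (0 : ℝ)..a, t ^ (n + 1) * exp (-t)
      = (n + 1) * (∫ t in (0 : ℝ)..a, t ^ n * exp (-t)) - a ^ (n + 1) * exp (-a) := by
  have h := integral_mul_deriv_eq_deriv_mul (a := 0) (b := a)
    (u := fun t => t ^ (n + 1)) (v := fun t => -exp (-t)) (u' := fun t => (n + 1) * t ^ n)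
    (v' := fun t => exp (-t))
    (fun t _ => by simpa using hasDerivAt_pow (n + 1) t)
    (fun t _ => by simpa using (hasDerivAt_neg t).exp.fun_neg)
    (by apply Continuous.intervalIntegrable; fun_prop)
    (by apply Continuous.intervalIntegrable; fun_prop)
  simp only [mul_neg, intervalIntegral.integral_neg, mul_assoc,
    intervalIntegral.integral_const_mul] at h
  rw [h, zero_pow n.succ_ne_zero]
  ring

theorem lowerGamma_natCast_add_one (n : ℕ) {x : ℝ} (hx : 0 ≤ x) :
    lowerGamma (n + 1) x = ∫ t in (0 : ℝ)..x, t ^ n * exp (-t) := by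
  rw [lowerGamma, integral_of_le hx, integral_Ioc_eq_integral_Ioo]
  simp [← rpow_natCast]

/-- `γ(n+1, n) / n!`, i.e. `1 - ṗ(n+1)`. -/
noncomputable def erlangCdfAt (n : ℕ) : ℝ :=
  (∫ t in (0 : ℝ)..n, t ^ n * exp (-t)) / n !

theorem lowerGamma_div_Gamma_natCast_add_one (n : ℕ) :
    lowerGamma (n + 1) n / Gamma (n + 1) = erlangCdfAt n := by
  rw [lowerGamma_natCast_add_one n n.cast_nonneg, Gamma_nat_eq_factorial, erlangCdfAt]

theorem erlangCdfAt_succ (n : ℕ) :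
    erlangCdfAt (n + 1) = erlangCdfAt n
      + ((∫ t in (n : ℝ)..n + 1, t ^ n * exp (-t)) - (n + 1) ^ n * exp (-(n + 1))) / n ! := by
  have hsplit := integral_add_adjacent_intervals (a := 0) (b := n) (c := n + 1)
    (μ := volume) (f := fun t : ℝ => t ^ n * exp (-t))
    (by apply Continuous.intervalIntegrable; fun_prop)
    (by apply Continuous.intervalIntegrable; fun_prop)
  rw [erlangCdfAt, erlangCdfAt, Nat.cast_succ, integral_pow_succ_mul_exp_neg, ← hsplit,
    Nat.factorial_succ]
  push_cast
  field_simp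
  ring

theorem strictMono_erlangCdfAt : StrictMono erlangCdfAt := by
  refine strictMono_nat_of_lt_succ fun n => ?_
  have hlt := mul_lt_integral_of_strictAntiOn (lt_add_one (n : ℝ)) (by fun_prop)
    ((strictAntiOn_pow_mul_exp_neg n).mono Icc_subset_Ici_self)
  rw [add_sub_cancel_left, one_mul] at hlt
  rw [erlangCdfAt_succ]
  exact lt_add_of_pos_right _ (div_pos (sub_pos.2 hlt) (by positivity))

theorem pdot_strictAnti (N M : ℕ) (hN : 1 ≤ N) (hNM : N < M) :
    1 - lowerGamma M ((M : ℝ) - 1) / Real.Gamma M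
      < 1 - lowerGamma N ((N : ℝ) - 1) / Real.Gamma N := by
  obtain ⟨n, rfl⟩ : ∃ n, N = n + 1 := ⟨N - 1, by omega⟩
  obtain ⟨m, rfl⟩ : ∃ m, M = m + 1 := ⟨M - 1, by omega⟩
  push_cast
  simp only [add_sub_cancel_right, lowerGamma_div_Gamma_natCast_add_one]
  linarith [strictMono_erlangCdfAt (show n < m by omega)]
end

section
/- The function ε(Q) = f(√T·(ln(1+Q) - R·ln 2)/√(1 - 1/(1+Q)²)), where f is the Gaussian Q-function and T > 0, R > 0, is strictly decreasing in Q on (0, ∞). -/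
/-!
`gaussQ` is strictly decreasing, being the integral of a positive density over a shrinking
half-line, so it suffices that the argument is strictly increasing in `Q`. With `u = 1 + Q` and
`c = R log 2 ≥ 0` the argument is `√T · (log u - c) / s(u)` where `s(u) = √(1 - 1/u²)`, whose
derivative has the sign of `u² s(u)² - (log u - c) = u² - 1 - log u + c`; this is positive
for `u > 1` since `log u ≤ u - 1 < u² - 1`.
-/

/-- The Gaussian Q-function. -/
noncomputable def gaussQ (x : ℝ) : ℝ :=
  ∫ t in Set.Ioi x, Real.exp (-t ^ 2 / 2) / Real.sqrt (2 * Real.pi)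

open Real Set MeasureTheory

theorem strictAnti_integral_Ioi_of_pos {f : ℝ → ℝ} (hf : Integrable f) (hpos : ∀ t, 0 < f t) :
    StrictAnti fun x => ∫ t in Ioi x, f t := by
  intro x y hxy
  have hsplit : ∫ t in Ioi x, f t = (∫ t in Ioc x y, f t) + ∫ t in Ioi y, f t := by
    rw [← setIntegral_union (Ioc_disjoint_Ioi le_rfl) measurableSet_Ioi hf.integrableOn
      hf.integrableOn, Ioc_union_Ioi_eq_Ioi hxy.le]
  have hIoc : 0 < ∫ t in Ioc x y, f t := by
    rw [← intervalIntegral.integral_of_le hxy.le]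
    exact intervalIntegral.intervalIntegral_pos_of_pos hf.intervalIntegrable hpos hxy
  simp only [hsplit]
  linarith

theorem gaussQ_strictAnti : StrictAnti gaussQ := by
  have hf : Integrable fun t : ℝ => exp (-t ^ 2 / 2) / sqrt (2 * π) := by
    convert (integrable_exp_neg_mul_sq (by norm_num : (0 : ℝ) < 1 / 2)).div_const (sqrt (2 * π))
      using 4
    ring
  exact strictAnti_integral_Ioi_of_pos hf fun t => by positivity

theorem one_sub_one_div_sq_pos {u : ℝ} (hu : 1 < u) : 0 < 1 - 1 / u ^ 2 := by
  rw [sub_pos, div_lt_one (by positivity)]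
  nlinarith

theorem hasDerivAt_sqrt_one_sub_one_div_sq {u : ℝ} (hu : 1 < u) :
    HasDerivAt (fun u : ℝ => sqrt (1 - 1 / u ^ 2)) (1 / (u ^ 3 * sqrt (1 - 1 / u ^ 2))) u := by
  have hsq : HasDerivAt (fun u : ℝ => u ^ 2) (2 * u) u := by
    simpa using hasDerivAt_pow 2 u
  have h := ((hsq.fun_inv (by positivity)).const_sub 1).sqrt
    (by simpa only [one_div] using (one_sub_one_div_sq_pos hu).ne')
  simp only [← one_div] at h
  convert h using 1
  field_simp

theorem strictMonoOn_log_sub_div_sqrt {c : ℝ} (hc : 0 ≤ c) :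
    StrictMonoOn (fun u : ℝ => (log u - c) / sqrt (1 - 1 / u ^ 2)) (Ioi 1) := by
  have hderiv : ∀ u ∈ Ioi (1 : ℝ), HasDerivAt (fun u : ℝ => (log u - c) / sqrt (1 - 1 / u ^ 2))
      ((u⁻¹ * sqrt (1 - 1 / u ^ 2) - (log u - c) * (1 / (u ^ 3 * sqrt (1 - 1 / u ^ 2)))) /
        sqrt (1 - 1 / u ^ 2) ^ 2) u := fun u hu =>
    ((hasDerivAt_log (by linarith [mem_Ioi.1 hu])).sub_const c).fun_div
      (hasDerivAt_sqrt_one_sub_one_div_sq hu) (sqrt_pos.2 (one_sub_one_div_sq_pos hu)).ne'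
  refine strictMonoOn_of_hasDerivWithinAt_pos (convex_Ioi 1)
    (fun u hu => (hderiv u hu).continuousAt.continuousWithinAt)
    (fun u hu => (hderiv u (interior_subset hu)).hasDerivWithinAt) ?_
  rw [interior_Ioi]
  intro u (hu : 1 < u)
  set s := sqrt (1 - 1 / u ^ 2)
  have hs : 0 < s := sqrt_pos.2 (one_sub_one_div_sq_pos hu)
  have hs2 : u ^ 2 * s ^ 2 = u ^ 2 - 1 := by
    rw [sq_sqrt (one_sub_one_div_sq_pos hu).le]
    field_simp
  have hlog : log u - c < u ^ 2 * s ^ 2 := by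
    nlinarith [log_le_sub_one_of_pos (by positivity : 0 < u)]
  have hderiv_eq : (u⁻¹ * s - (log u - c) * (1 / (u ^ 3 * s))) / s ^ 2
      = (u ^ 2 * s ^ 2 - (log u - c)) / (u ^ 3 * s ^ 3) := by
    field_simp
  rw [hderiv_eq]
  exact div_pos (by linarith) (by positivity)

theorem eps_strictAnti (T R : ℝ) (hT : 0 < T) (hR : 0 < R) :
    StrictAntiOn (fun Q : ℝ =>
        gaussQ (Real.sqrt T * (Real.log (1 + Q) - R * Real.log 2) /
          Real.sqrt (1 - 1 / (1 + Q) ^ 2))) (Set.Ioi 0) := by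
  intro a (ha : 0 < a) b (hb : 0 < b) hab
  apply gaussQ_strictAnti
  simp only [mul_div_assoc]
  exact mul_lt_mul_of_pos_left
    (strictMonoOn_log_sub_div_sqrt (by positivity) (lt_add_of_pos_right 1 ha)
      (lt_add_of_pos_right 1 hb) (by linarith))
    (sqrt_pos.2 hT)
end
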